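/- arXiv:1206.1811 — 2 statements merged into one kernel-verified Lean document; each statement's English description precedes it below -/
import Mathlib

section
/- Let X be a connected topological space and U an open connected subset of X such that the complement X \ U is disconnected. Then the topological boundary of U (the frontier, closure of U minus U) is disconnected. -/
lemma aux_clopen_contra {X : Type*} [TopologicalSpace X] [ConnectedSpace X]
    (U u v : Set X) (hUo : IsOpen U) (hu : IsOpen u) (hv : IsOpen v)
    (hsub : Uᶜ ⊆ u ∪ v)
    (hemp : Uᶜ ∩ (u ∩ v) = ∅) (hfr : frontier U ⊆ u)
    (hx : (Uᶜ ∩ u).Nonempty) (hy : (Uᶜ ∩ v).Nonempty) : False := by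
  set A : Set X := Uᶜ ∩ v with hA
  have hdisj : ∀ w, w ∈ Uᶜ → w ∈ u → w ∈ v → False := by
    intro w h1 h2 h3
    have : w ∈ Uᶜ ∩ (u ∩ v) := ⟨h1, h2, h3⟩
    rw [hemp] at this; exact this
  have hAopen : IsOpen A := by
    rw [isOpen_iff_mem_nhds]
    rintro z ⟨hzU, hzv⟩
    have hzcl : z ∉ closure U := by
      intro hc
      have hzfr : z ∈ frontier U := ⟨hc, by rwa [hUo.interior_eq]⟩
      exact hdisj z hzU (hfr hzfr) hzv
    have hmem : (closure U)ᶜ ∩ v ∈ nhds z :=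
      (isClosed_closure.isOpen_compl.inter hv).mem_nhds ⟨hzcl, hzv⟩
    exact Filter.mem_of_superset hmem
      (fun w ⟨hw1, hw2⟩ => ⟨fun hwU => hw1 (subset_closure hwU), hw2⟩)
  have hAclosed : IsClosed A := by
    rw [← closure_subset_iff_isClosed]
    intro z hz
    have hzU : z ∈ Uᶜ := by
      have h1 : closure A ⊆ closure Uᶜ := closure_mono Set.inter_subset_left
      have h2 := h1 hz
      rwa [hUo.isClosed_compl.closure_eq] at h2
    rcases hsub hzU with hzu | hzv
    · exfalso
      rcases mem_closure_iff.mp hz u hu hzu with ⟨w, hwu, hwU, hwv⟩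
      exact hdisj w hwU hwu hwv
    · exact ⟨hzU, hzv⟩
  have hAclopen : IsClopen A := ⟨hAclosed, hAopen⟩
  rcases isClopen_iff.mp hAclopen with h | h
  · rcases hy with ⟨y, hyU, hyv⟩
    have : y ∈ A := ⟨hyU, hyv⟩
    rw [h] at this; exact this
  · rcases hx with ⟨x, hxU, hxu⟩
    have : x ∈ A := by rw [h]; trivial
    exact hdisj x hxU hxu this.2

/-- If `X` is a connected (normal Hausdorff) topological space and `U ⊆ X` is open and
connected with disconnected complement `X \ U`, then the frontier of `U` is disconnected.
"Disconnected" for a set is expressed as `¬ IsPreconnected`. -/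
theorem frontier_disconnected_of_compl_disconnected
    {X : Type*} [TopologicalSpace X] [NormalSpace X] [T1Space X] [ConnectedSpace X]
    (U : Set X) (hUo : IsOpen U) (hUc : IsConnected U)
    (hcut : ¬ IsPreconnected Uᶜ) :
    ¬ IsPreconnected (frontier U) := by
  intro hfr
  apply hcut
  intro u v hu hv hsub hx hy
  by_contra hne
  have hemp : Uᶜ ∩ (u ∩ v) = ∅ := Set.not_nonempty_iff_eq_empty.mp hne
  have hfrsub : frontier U ⊆ Uᶜ := by
    rw [hUo.frontier_eq]
    exact Set.diff_subset_compl _ _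
  -- frontier U ⊆ u or frontier U ⊆ v
  have hcase : frontier U ⊆ u ∨ frontier U ⊆ v := by
    by_cases h1 : (frontier U ∩ u).Nonempty
    · by_cases h2 : (frontier U ∩ v).Nonempty
      · exfalso
        rcases hfr u v hu hv (fun z hz => hsub (hfrsub hz)) h1 h2 with ⟨w, hwf, hwu, hwv⟩
        have : w ∈ Uᶜ ∩ (u ∩ v) := ⟨hfrsub hwf, hwu, hwv⟩
        rw [hemp] at this; exact this
      · left
        intro z hz
        rcases hsub (hfrsub hz) with h | h
        · exact h
        · exact absurd ⟨z, hz, h⟩ h2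
    · right
      intro z hz
      rcases hsub (hfrsub hz) with h | h
      · exact absurd ⟨z, hz, h⟩ h1
      · exact h
  rcases hcase with h | h
  · exact (aux_clopen_contra U u v hUo hu hv hsub hemp h hx hy).elim
  · refine (aux_clopen_contra U v u hUo hv hu (fun z hz => (hsub hz).symm) ?_ h hy hx).elim
    rw [← hemp]; ext z; simp only [Set.mem_inter_iff]; tauto
end

section
/- Let U be a nonempty open connected proper subset of ℝⁿ whose boundary is disconnected. Then ℝⁿ \ U is disconnected. -/
open Set Finset

noncomputable section CDLift

instance cd_fact2 : Fact ((0:ℝ) < 2) := ⟨two_pos⟩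

/-- The canonical representative in `(-1, 1]` of an element of `AddCircle 2`. -/
def rho2 (z : AddCircle (2:ℝ)) : ℝ := (AddCircle.equivIoc 2 (-1) z : Set.Ioc (-1:ℝ) (-1+2))

lemma rho2_mem (z : AddCircle (2:ℝ)) : rho2 z ∈ Ioc (-1:ℝ) 1 := by
  have h := (AddCircle.equivIoc 2 (-1) z).2
  unfold rho2
  simp only [Set.mem_Ioc] at h ⊢
  constructor
  · exact h.1
  · have := h.2; linarith

lemma rho2_coe (z : AddCircle (2:ℝ)) : ((rho2 z : ℝ) : AddCircle (2:ℝ)) = z := by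
  conv_rhs => rw [← (AddCircle.equivIoc 2 (-1)).symm_apply_apply z]
  rfl

lemma rho2_eq {b : ℝ} (hb : b ∈ Ioc (-1:ℝ) 1) : rho2 ((b : ℝ) : AddCircle (2:ℝ)) = b := by
  have hb' : b ∈ Ioc (-1:ℝ) (-1+2) := by
    simp only [Set.mem_Ioc] at hb ⊢; exact ⟨hb.1, by linarith [hb.2]⟩
  have h : AddCircle.equivIoc 2 (-1) ((b:ℝ) : AddCircle (2:ℝ)) = ⟨b, hb'⟩ := by
    rw [Equiv.apply_eq_iff_eq_symm_apply]; rfl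
  simp [rho2, h]

lemma rho2_zero : rho2 (0 : AddCircle (2:ℝ)) = 0 := by
  have h0 : ((0:ℝ) : AddCircle (2:ℝ)) = 0 := by norm_cast
  rw [← h0, rho2_eq (by norm_num)]

lemma rho2_negone : rho2 (((-1:ℝ)) : AddCircle (2:ℝ)) = 1 := by
  have h : (((-1:ℝ)) : AddCircle (2:ℝ)) = ((1:ℝ) : AddCircle (2:ℝ)) := by
    have := AddCircle.coe_add_period (2:ℝ) (-1)
    norm_num at this
    exact this.symm
  rw [h, rho2_eq (by norm_num)]

lemma rho2_add {u v : AddCircle (2:ℝ)} (h : rho2 u + rho2 v ∈ Ioc (-1:ℝ) 1) :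
    rho2 (u + v) = rho2 u + rho2 v := by
  have hc : ((rho2 u + rho2 v : ℝ) : AddCircle (2:ℝ)) = u + v := by
    rw [AddCircle.coe_add, rho2_coe, rho2_coe]
  rw [← hc, rho2_eq h]

lemma rho2_continuousAt {z : AddCircle (2:ℝ)} (hz : z ≠ (((-1:ℝ)) : AddCircle (2:ℝ))) :
    ContinuousAt rho2 z :=
  (continuous_subtype_val.continuousAt).comp (AddCircle.continuousAt_equivIoc 2 (-1) hz)

end CDLift

noncomputable section CDBset

/-- A small open "ball" around `0` in `AddCircle 2`. -/
def Bset2 : Set (AddCircle (2:ℝ)) := (fun r : ℝ => ((r:ℝ) : AddCircle (2:ℝ))) '' Ioo (-(1/8) : ℝ) (1/8)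

lemma isOpen_Bset2 : IsOpen Bset2 :=
  QuotientAddGroup.isOpenMap_coe _ isOpen_Ioo

lemma mem_Bset2 {z : AddCircle (2:ℝ)} : z ∈ Bset2 ↔ rho2 z ∈ Ioo (-(1/8):ℝ) (1/8) := by
  constructor
  · rintro ⟨b, hb, rfl⟩
    simp only [Set.mem_Ioo] at hb
    rwa [rho2_eq (by constructor <;> [linarith [hb.1]; linarith [hb.2]] : b ∈ Ioc (-1:ℝ) 1),
      Set.mem_Ioo]
  · intro h
    exact ⟨rho2 z, h, rho2_coe z⟩

lemma zero_mem_Bset2 : (0 : AddCircle (2:ℝ)) ∈ Bset2 :=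
  ⟨0, by norm_num, by norm_cast⟩

lemma Bset2_ne {z : AddCircle (2:ℝ)} (h : z ∈ Bset2) : z ≠ (((-1:ℝ)) : AddCircle (2:ℝ)) := by
  intro he
  have h1 := (mem_Bset2.1 h).2
  rw [he, rho2_negone] at h1
  norm_num at h1

end CDBset

noncomputable section CDPsi

variable {E : Type*} [AddCommGroup E] [Module ℝ E] [TopologicalSpace E] [ContinuousSMul ℝ E]

/-- Increments of `φ` along the segment from `0` to `x` at scale `1/m` are all small. -/
def GoodAt (φ : E → AddCircle (2:ℝ)) (m : ℕ) (x : E) : Prop :=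
  ∀ s t : ℝ, s ∈ Icc (0:ℝ) 1 → t ∈ Icc (0:ℝ) 1 → |t - s| ≤ 1/(m:ℝ) →
    φ (t • x) - φ (s • x) ∈ Bset2

/-- The sum of lifted increments along the segment from `0` to `x`, at scale `1/m`. -/
def psiN (φ : E → AddCircle (2:ℝ)) (m : ℕ) (x : E) : ℝ :=
  ∑ i ∈ Finset.range m, rho2 (φ ((((i:ℝ)+1)/(m:ℝ)) • x) - φ (((i:ℝ)/(m:ℝ)) • x))

lemma coe_psiN (φ : E → AddCircle (2:ℝ)) (m : ℕ) (hm : 1 ≤ m) (x : E) :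
    ((psiN φ m x : ℝ) : AddCircle (2:ℝ)) = φ x - φ 0 := by
  have key : ∀ N : ℕ,
      ((∑ i ∈ Finset.range N,
        rho2 (φ ((((i:ℝ)+1)/(m:ℝ)) • x) - φ (((i:ℝ)/(m:ℝ)) • x)) : ℝ) : AddCircle (2:ℝ))
        = φ (((N:ℝ)/(m:ℝ)) • x) - φ ((0:ℝ) • x) := by
    intro N
    induction N with
    | zero => simp
    | succ N ih =>
      rw [Finset.sum_range_succ, AddCircle.coe_add, ih, rho2_coe]
      push_cast
      abel
  have h := key m
  have hm' : (m:ℝ) ≠ 0 := Nat.cast_ne_zero.2 (by omega)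
  rw [div_self hm', one_smul, zero_smul] at h
  exact h

lemma blk2 (h : ℕ → AddCircle (2:ℝ)) (k : ℕ) (a : ℕ)
    (H : ∀ i j : ℕ, i ≤ j → j ≤ a + k → a ≤ i → j - i ≤ k → h j - h i ∈ Bset2) :
    ∀ j : ℕ, j ≤ k →
      rho2 (h (a + j) - h a)
        = ∑ i ∈ Finset.range j, rho2 (h (a + i + 1) - h (a + i)) := by
  intro j
  induction j with
  | zero => simp [rho2_zero]
  | succ j ih =>
    intro hj
    have hj' : j ≤ k := by omega
    have h1 : h (a+j) - h a ∈ Bset2 := H a (a+j) (by omega) (by omega) (by omega) (by omega)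
    have h2 : h (a+j+1) - h (a+j) ∈ Bset2 :=
      H (a+j) (a+j+1) (by omega) (by omega) (by omega) (by omega)
    have r1 := mem_Bset2.1 h1
    have r2 := mem_Bset2.1 h2
    simp only [Set.mem_Ioo] at r1 r2
    have key : rho2 (h (a+(j+1)) - h a)
        = rho2 (h (a+j) - h a) + rho2 (h (a+j+1) - h (a+j)) := by
      have e : h (a+(j+1)) - h a = (h (a+j) - h a) + (h (a+j+1) - h (a+j)) := by
        have e' : a + (j+1) = a + j + 1 := by omega
        rw [e']; abel
      rw [e]
      exact rho2_add ⟨by linarith [r1.1, r2.1], by linarith [r1.2, r2.2]⟩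
    rw [key, ih hj', Finset.sum_range_succ]

lemma multiStep2 (h : ℕ → AddCircle (2:ℝ)) (k m : ℕ)
    (H : ∀ i j : ℕ, i ≤ j → j ≤ m*k → j - i ≤ k → h j - h i ∈ Bset2) :
    ∑ i ∈ Finset.range (m*k), rho2 (h (i+1) - h i)
      = ∑ a ∈ Finset.range m, rho2 (h (a*k + k) - h (a*k)) := by
  suffices key : ∀ b, b ≤ m → ∑ i ∈ Finset.range (b*k), rho2 (h (i+1) - h i)
      = ∑ a ∈ Finset.range b, rho2 (h (a*k + k) - h (a*k)) from key m le_rfl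
  intro b
  induction b with
  | zero => simp
  | succ b ih =>
    intro hb
    have hb' : b ≤ m := by omega
    rw [Nat.succ_mul, Finset.sum_range_add, ih hb', Finset.sum_range_succ]
    congr 1
    have hblk := blk2 h k (b*k) ?_ k le_rfl
    · rw [hblk]
    · intro i j hij hjk hbi hji
      refine H i j hij ?_ hji
      have hmul : (b+1) * k ≤ m * k := Nat.mul_le_mul_right k (by omega)
      have : (b+1) * k = b*k + k := by rw [Nat.succ_mul]
      omega

lemma psiN_mul (φ : E → AddCircle (2:ℝ)) (m k : ℕ) (hm : 1 ≤ m) (hk : 1 ≤ k) (x : E)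
    (hg : GoodAt φ m x) : psiN φ (m*k) x = psiN φ m x := by
  have hm0 : (0:ℝ) < (m:ℝ) := by exact_mod_cast hm
  have hk0 : (0:ℝ) < (k:ℝ) := by exact_mod_cast hk
  have hmne : (m:ℝ) ≠ 0 := hm0.ne'
  have hkne : (k:ℝ) ≠ 0 := hk0.ne'
  have hmk0 : (0:ℝ) < (m:ℝ)*(k:ℝ) := mul_pos hm0 hk0
  set h : ℕ → AddCircle (2:ℝ) := fun i => φ (((i:ℝ)/((m:ℝ)*(k:ℝ))) • x) with hh
  have H : ∀ i j : ℕ, i ≤ j → j ≤ m*k → j - i ≤ k → h j - h i ∈ Bset2 := by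
    intro i j hij hjm hji
    have hjR : (j:ℝ) ≤ (m:ℝ)*(k:ℝ) := by
      have : (j:ℝ) ≤ ((m*k:ℕ):ℝ) := by exact_mod_cast hjm
      push_cast at this; linarith
    have hiR : (0:ℝ) ≤ (i:ℝ) := Nat.cast_nonneg i
    have hijR : (i:ℝ) ≤ (j:ℝ) := by exact_mod_cast hij
    have hjiR : (j:ℝ) - (i:ℝ) ≤ (k:ℝ) := by
      have h' : j ≤ i + k := by omega
      have h'' : (j:ℝ) ≤ (i:ℝ) + (k:ℝ) := by exact_mod_cast h'
      linarith
    apply hg ((i:ℝ)/((m:ℝ)*(k:ℝ))) ((j:ℝ)/((m:ℝ)*(k:ℝ)))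
    · exact ⟨div_nonneg hiR hmk0.le, by rw [div_le_one hmk0]; linarith⟩
    · exact ⟨div_nonneg (by linarith) hmk0.le, by rw [div_le_one hmk0]; linarith⟩
    · rw [div_sub_div_same, abs_of_nonneg (div_nonneg (by linarith) hmk0.le),
        div_le_div_iff₀ hmk0 hm0]
      nlinarith
  have key := multiStep2 h k m H
  have e1 : psiN φ (m*k) x = ∑ i ∈ Finset.range (m*k), rho2 (h (i+1) - h i) := by
    unfold psiN
    refine Finset.sum_congr rfl fun i _ => ?_
    simp only [hh]
    norm_num
  have e2 : ∑ a ∈ Finset.range m, rho2 (h (a*k + k) - h (a*k)) = psiN φ m x := by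
    unfold psiN
    refine Finset.sum_congr rfl fun a _ => ?_
    simp only [hh]
    have eA : (((a*k+k:ℕ)):ℝ)/((m:ℝ)*(k:ℝ)) = ((a:ℝ)+1)/(m:ℝ) := by
      push_cast; field_simp
    have eB : (((a*k:ℕ)):ℝ)/((m:ℝ)*(k:ℝ)) = ((a:ℝ))/(m:ℝ) := by
      push_cast; field_simp
    rw [eA, eB]
  rw [e1, key, e2]

end CDPsi

noncomputable section CDLiftMain

variable {E : Type*} [NormedAddCommGroup E] [NormedSpace ℝ E]

lemma exists_good (φ : E → AddCircle (2:ℝ)) (hφ : Continuous φ) (x₀ : E) :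
    ∃ m : ℕ, 1 ≤ m ∧ ∃ V : Set E, IsOpen V ∧ x₀ ∈ V ∧ ∀ x ∈ V, GoodAt φ m x := by
  set F : (ℝ × ℝ) × E → AddCircle (2:ℝ) :=
    fun q => φ (q.1.2 • q.2) - φ (q.1.1 • q.2) with hF
  have hFc : Continuous F := by
    apply Continuous.sub
    · exact hφ.comp ((continuous_fst.snd).smul continuous_snd)
    · exact hφ.comp ((continuous_fst.fst).smul continuous_snd)
  set Ω : Set ((ℝ × ℝ) × E) := F ⁻¹' Bset2 with hΩdef
  have hΩ : IsOpen Ω := isOpen_Bset2.preimage hFc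
  set Ω₀ : Set (ℝ × ℝ) := (fun q : ℝ × ℝ => ((q, x₀) : (ℝ × ℝ) × E)) ⁻¹' Ω with hΩ₀def
  have hΩ₀ : IsOpen Ω₀ := hΩ.preimage (continuous_id.prodMk continuous_const)
  set D : Set (ℝ × ℝ) := (fun t : ℝ => (t, t)) '' Icc (0:ℝ) 1 with hDdef
  have hD : IsCompact D := isCompact_Icc.image (continuous_id.prodMk continuous_id)
  have hDsub : D ⊆ Ω₀ := by
    rintro q ⟨t, ht, rfl⟩
    show F ((t, t), x₀) ∈ Bset2
    simp only [hF, sub_self]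
    exact zero_mem_Bset2
  obtain ⟨δ, δpos, hδ⟩ := hD.exists_thickening_subset_open hΩ₀ hDsub
  obtain ⟨m', hm'⟩ := exists_nat_one_div_lt δpos
  set m : ℕ := m' + 1 with hmdef
  have hm1 : 1 ≤ m := by omega
  have hmδ : 1/(m:ℝ) < δ := by
    have : ((m':ℝ) + 1) = (m:ℝ) := by push_cast [hmdef]; ring
    rwa [this] at hm'
  set T : Set (ℝ × ℝ) :=
    {q : ℝ × ℝ | q.1 ∈ Icc (0:ℝ) 1 ∧ q.2 ∈ Icc (0:ℝ) 1 ∧ |q.2 - q.1| ≤ 1/(m:ℝ)} with hTdef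
  have hTclosed : IsClosed T := by
    have h1 : IsClosed {q : ℝ × ℝ | q.1 ∈ Icc (0:ℝ) 1} := isClosed_Icc.preimage continuous_fst
    have h2 : IsClosed {q : ℝ × ℝ | q.2 ∈ Icc (0:ℝ) 1} := isClosed_Icc.preimage continuous_snd
    have h3 : IsClosed {q : ℝ × ℝ | |q.2 - q.1| ≤ 1/(m:ℝ)} :=
      isClosed_le ((continuous_snd.sub continuous_fst).abs) continuous_const
    exact (h1.inter (h2.inter h3))
  have hTc : IsCompact T := by
    refine IsCompact.of_isClosed_subset ((isCompact_Icc (a := (0:ℝ)) (b := 1)).prod (isCompact_Icc (a := (0:ℝ)) (b := 1))) hTclosed ?_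
    rintro q ⟨hq1, hq2, -⟩
    exact ⟨hq1, hq2⟩
  have hTΩ₀ : T ⊆ Ω₀ := by
    rintro q ⟨hq1, hq2, hq3⟩
    apply hδ
    rw [Metric.mem_thickening_iff]
    refine ⟨(q.1, q.1), ⟨q.1, hq1, rfl⟩, ?_⟩
    have hdist : dist q (q.1, q.1) = |q.2 - q.1| := by
      rw [Prod.dist_eq]
      simp [Real.dist_eq]
    rw [hdist]
    exact lt_of_le_of_lt hq3 hmδ
  have hsub : T ×ˢ ({x₀} : Set E) ⊆ Ω := by
    rintro ⟨q, y⟩ ⟨hq, hy⟩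
    rcases hy with rfl
    exact hTΩ₀ hq
  obtain ⟨u, V, hu, hV, hTu, hx₀V, huv⟩ :=
    generalized_tube_lemma hTc isCompact_singleton hΩ hsub
  refine ⟨m, hm1, V, hV, hx₀V rfl, ?_⟩
  intro x hx s t hs ht hst
  exact huv (Set.mk_mem_prod (hTu (show (s,t) ∈ T from ⟨hs, ht, hst⟩)) hx)

lemma lift_exists (φ : E → AddCircle (2:ℝ)) (hφ : Continuous φ) :
    ∃ ψ : E → ℝ, Continuous ψ ∧ ∀ x, ((ψ x : ℝ) : AddCircle (2:ℝ)) = φ x - φ 0 := by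
  have hex : ∀ x : E, ∃ m : ℕ, 1 ≤ m ∧ GoodAt φ m x := by
    intro x
    obtain ⟨m, hm, V, _, hxV, hg⟩ := exists_good φ hφ x
    exact ⟨m, hm, hg x hxV⟩
  choose M hM1 hMg using hex
  refine ⟨fun x => psiN φ (M x) x, ?_, fun x => coe_psiN φ (M x) (hM1 x) x⟩
  rw [continuous_iff_continuousAt]
  intro x₀
  obtain ⟨m, hm, V, hVo, hx₀, hg⟩ := exists_good φ hφ x₀
  have hm0 : (0:ℝ) < (m:ℝ) := by exact_mod_cast hm
  have heq : ∀ x ∈ V, psiN φ (M x) x = psiN φ m x := by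
    intro x hx
    have h1 := psiN_mul φ (M x) m (hM1 x) hm x (hMg x)
    have h2 := psiN_mul φ m (M x) hm (hM1 x) x (hg x hx)
    rw [← h1, mul_comm, h2]
  have hterm : ∀ i ∈ Finset.range m,
      ContinuousAt (fun x : E =>
        rho2 (φ ((((i:ℝ)+1)/(m:ℝ)) • x) - φ (((i:ℝ)/(m:ℝ)) • x))) x₀ := by
    intro i hi
    rw [Finset.mem_range] at hi
    have hi1 : (i:ℝ) + 1 ≤ (m:ℝ) := by exact_mod_cast hi
    have hin : φ ((((i:ℝ)+1)/(m:ℝ)) • x₀) - φ (((i:ℝ)/(m:ℝ)) • x₀) ∈ Bset2 := by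
      apply hg x₀ hx₀ ((i:ℝ)/(m:ℝ)) (((i:ℝ)+1)/(m:ℝ))
      · exact ⟨div_nonneg (Nat.cast_nonneg i) hm0.le, by rw [div_le_one hm0]; linarith⟩
      · refine ⟨div_nonneg (by positivity) hm0.le, by rw [div_le_one hm0]; linarith⟩
      · rw [div_sub_div_same]
        have : (i:ℝ) + 1 - (i:ℝ) = 1 := by ring
        rw [this, abs_of_nonneg (by positivity)]
    have hinner : Continuous (fun x : E =>
        φ ((((i:ℝ)+1)/(m:ℝ)) • x) - φ (((i:ℝ)/(m:ℝ)) • x)) :=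
      (hφ.comp (continuous_const_smul _)).sub (hφ.comp (continuous_const_smul _))
    have hIA : ContinuousAt (fun x : E =>
        φ ((((i:ℝ)+1)/(m:ℝ)) • x) - φ (((i:ℝ)/(m:ℝ)) • x)) x₀ := hinner.continuousAt
    show ContinuousAt (rho2 ∘ (fun x : E =>
        φ ((((i:ℝ)+1)/(m:ℝ)) • x) - φ (((i:ℝ)/(m:ℝ)) • x))) x₀
    exact ContinuousAt.comp (rho2_continuousAt (Bset2_ne hin)) hIA
  have hcont : ContinuousAt (fun x => psiN φ m x) x₀ := by
    unfold psiN
    exact tendsto_finset_sum _ hterm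
  refine hcont.congr ?_
  exact Filter.eventuallyEq_of_mem (hVo.mem_nhds hx₀) (fun x hx => (heq x hx).symm)

end CDLiftMain

section CDMain

lemma const_of_int_values {E : Type*} [TopologicalSpace E] {f : E → ℝ} (hf : Continuous f)
    {S : Set E} (hS : IsPreconnected S) (hv : ∀ x ∈ S, ∃ j : ℤ, f x = 2*j) :
    ∀ x ∈ S, ∀ y ∈ S, f x = f y := by
  have himg : IsPreconnected (f '' S) := hS.image f hf.continuousOn
  have hord := himg.ordConnected
  have key : ∀ x ∈ S, ∀ y ∈ S, ¬ (f x < f y) := by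
    intro x hx y hy hlt
    obtain ⟨jx, hjx⟩ := hv x hx
    obtain ⟨jy, hjy⟩ := hv y hy
    have hjxy : jx < jy := by
      have h1 : (2:ℝ)*jx < 2*jy := by rw [← hjx, ← hjy]; exact hlt
      have h2 : (jx:ℝ) < jy := by linarith
      exact_mod_cast h2
    have hjxy' : (jx:ℝ) + 1 ≤ (jy:ℝ) := by exact_mod_cast hjxy
    have hcmem : (2*(jx:ℝ)+1) ∈ Icc (f x) (f y) := by
      constructor
      · rw [hjx]; linarith
      · rw [hjy]; linarith
    have hmem := (hord.out (Set.mem_image_of_mem f hx) (Set.mem_image_of_mem f hy)) hcmem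
    obtain ⟨z, hz, hfz⟩ := hmem
    obtain ⟨jz, hjz⟩ := hv z hz
    rw [hjz] at hfz
    have : (2:ℤ)*jz = 2*jx + 1 := by exact_mod_cast hfz
    omega
  intro x hx y hy
  rcases lt_trichotomy (f x) (f y) with h|h|h
  · exact absurd h (key x hx y hy)
  · exact h
  · exact absurd h (key y hy x hx)

end CDMain

/-- Let `U` be a nonempty open connected proper subset of `ℝⁿ` (`n ≥ 1`) whose frontier is
disconnected.  Then `ℝⁿ \ U` is disconnected. -/
theorem compl_disconnected_of_frontier_disconnected_euclidean
    {n : ℕ} (hn : 1 ≤ n) (U : Set (EuclideanSpace ℝ (Fin n)))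
    (hUo : IsOpen U) (hUc : IsConnected U) (hne : U.Nonempty) (hproper : U ≠ Set.univ)
    (hbd : ¬ IsPreconnected (frontier U)) :
    ¬ IsPreconnected Uᶜ := by
  classical
  intro hc
  unfold IsPreconnected at hbd
  push_neg at hbd
  obtain ⟨u, v, hu, hv, hsub, hne1, hne2, hdisj⟩ := hbd
  obtain ⟨x₁, hx₁f, hx₁u⟩ := hne1
  obtain ⟨x₂, hx₂f, hx₂v⟩ := hne2
  set F₁ : Set (EuclideanSpace ℝ (Fin n)) := frontier U \ v with hF₁
  set F₂ : Set (EuclideanSpace ℝ (Fin n)) := frontier U \ u with hF₂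
  have hF₁c : IsClosed F₁ := isClosed_frontier.sdiff hv
  have hF₂c : IsClosed F₂ := isClosed_frontier.sdiff hu
  have hdisj12 : Disjoint F₁ F₂ := by
    rw [Set.disjoint_left]
    rintro z ⟨hzf, hzv⟩ ⟨-, hzu⟩
    rcases hsub hzf with h|h
    · exact hzu h
    · exact hzv h
  have hx₁F : x₁ ∈ F₁ :=
    ⟨hx₁f, fun hv' => (Set.eq_empty_iff_forall_notMem.1 hdisj x₁) ⟨hx₁f, hx₁u, hv'⟩⟩
  have hx₂F : x₂ ∈ F₂ :=
    ⟨hx₂f, fun hu' => (Set.eq_empty_iff_forall_notMem.1 hdisj x₂) ⟨hx₂f, hu', hx₂v⟩⟩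
  have hcover : ∀ z ∈ frontier U, z ∈ F₁ ∪ F₂ := by
    intro z hz
    rcases hsub hz with h|h
    · exact Or.inl ⟨hz, fun hv' => (Set.eq_empty_iff_forall_notMem.1 hdisj z) ⟨hz, h, hv'⟩⟩
    · exact Or.inr ⟨hz, fun hu' => (Set.eq_empty_iff_forall_notMem.1 hdisj z) ⟨hz, hu', h⟩⟩
  obtain ⟨g, hg0, hg1, hg01⟩ := exists_continuous_zero_one_of_isClosed hF₁c hF₂c hdisj12
  set φ : EuclideanSpace ℝ (Fin n) → AddCircle (2:ℝ) :=
    (closure U).piecewise (fun x => ((g x : ℝ) : AddCircle (2:ℝ)))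
      (fun x => ((-(g x) : ℝ) : AddCircle (2:ℝ))) with hφdef
  have hone : ((1:ℝ) : AddCircle (2:ℝ)) = (((-1:ℝ)) : AddCircle (2:ℝ)) := by
    have h := AddCircle.coe_add_period (2:ℝ) (-1)
    norm_num at h
    exact h
  have hagree : ∀ a ∈ frontier U,
      ((g a : ℝ) : AddCircle (2:ℝ)) = ((-(g a) : ℝ) : AddCircle (2:ℝ)) := by
    intro a ha
    rcases hcover a ha with h|h
    · have hz : g a = 0 := by simpa using hg0 h
      rw [hz]; norm_num
    · have hz : g a = 1 := by simpa using hg1 h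
      rw [hz]; norm_num; exact hone
  have hcoe : Continuous (fun r : ℝ => ((r : ℝ) : AddCircle (2:ℝ))) :=
    AddCircle.continuous_mk' (2:ℝ)
  have hφc : Continuous φ := by
    apply Continuous.piecewise
    · intro a ha
      exact hagree a (frontier_closure_subset ha)
    · exact hcoe.comp g.continuous
    · exact hcoe.comp g.continuous.neg
  obtain ⟨ψ₀, hψ₀c, hψ₀⟩ := lift_exists φ hφc
  set r₀ : ℝ := if (0:EuclideanSpace ℝ (Fin n)) ∈ closure U then g 0 else -(g 0) with hr₀
  have hφ0 : φ 0 = ((r₀ : ℝ) : AddCircle (2:ℝ)) := by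
    by_cases h : (0:EuclideanSpace ℝ (Fin n)) ∈ closure U
    · rw [hφdef, hr₀]
      simp only [Set.piecewise_eq_of_mem _ _ _ h, if_pos h]
    · rw [hφdef, hr₀]
      simp only [Set.piecewise_eq_of_notMem _ _ _ h, if_neg h]
  set ψ : EuclideanSpace ℝ (Fin n) → ℝ := fun x => ψ₀ x + r₀ with hψdef
  have hψc : Continuous ψ := hψ₀c.add continuous_const
  have hψ : ∀ x, ((ψ x : ℝ) : AddCircle (2:ℝ)) = φ x := by
    intro x
    rw [hψdef]
    simp only
    rw [AddCircle.coe_add, hψ₀ x, ← hφ0]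
    abel
  have hφcl : ∀ x ∈ closure U, φ x = ((g x : ℝ) : AddCircle (2:ℝ)) :=
    fun x hx => Set.piecewise_eq_of_mem _ _ _ hx
  have hφcompl : ∀ x ∈ Uᶜ, φ x = ((-(g x) : ℝ) : AddCircle (2:ℝ)) := by
    intro x hx
    by_cases h : x ∈ closure U
    · have hfx : x ∈ frontier U := by rw [hUo.frontier_eq]; exact ⟨h, hx⟩
      rw [hφcl x h]
      exact hagree x hfx
    · exact Set.piecewise_eq_of_notMem _ _ _ h
  have hmem1 : ∀ x ∈ closure U, ∃ j : ℤ, ψ x - g x = 2*j := by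
    intro x hx
    have h : ((ψ x : ℝ) : AddCircle (2:ℝ)) = ((g x : ℝ) : AddCircle (2:ℝ)) := by
      rw [hψ x, hφcl x hx]
    rw [QuotientAddGroup.eq_iff_sub_mem, AddSubgroup.mem_zmultiples_iff] at h
    obtain ⟨k, hk⟩ := h
    refine ⟨k, ?_⟩
    rw [← hk, zsmul_eq_mul]
    ring
  have hmem2 : ∀ x ∈ Uᶜ, ∃ j : ℤ, ψ x + g x = 2*j := by
    intro x hx
    have h : ((ψ x : ℝ) : AddCircle (2:ℝ)) = ((-(g x) : ℝ) : AddCircle (2:ℝ)) := by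
      rw [hψ x, hφcompl x hx]
    rw [QuotientAddGroup.eq_iff_sub_mem, AddSubgroup.mem_zmultiples_iff] at h
    obtain ⟨k, hk⟩ := h
    refine ⟨k, ?_⟩
    have h2 : ψ x - (-(g x)) = ψ x + g x := by ring
    rw [h2] at hk
    rw [← hk, zsmul_eq_mul]
    ring
  have hclpre : IsPreconnected (closure U) := hUc.isPreconnected.closure
  have hconst1 := const_of_int_values (hψc.sub g.continuous) hclpre hmem1
  have hconst2 := const_of_int_values (hψc.add g.continuous) hc hmem2
  have hx₁cl : x₁ ∈ closure U := frontier_subset_closure hx₁f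
  have hx₂cl : x₂ ∈ closure U := frontier_subset_closure hx₂f
  have hx₁co : x₁ ∈ Uᶜ := by
    have h := hx₁f; rw [hUo.frontier_eq] at h; exact h.2
  have hx₂co : x₂ ∈ Uᶜ := by
    have h := hx₂f; rw [hUo.frontier_eq] at h; exact h.2
  have e1 : ψ x₁ - g x₁ = ψ x₂ - g x₂ := hconst1 x₁ hx₁cl x₂ hx₂cl
  have e2 : ψ x₁ + g x₁ = ψ x₂ + g x₂ := hconst2 x₁ hx₁co x₂ hx₂co
  have hg₁ : g x₁ = 0 := by simpa using hg0 hx₁F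
  have hg₂ : g x₂ = 1 := by simpa using hg1 hx₂F
  rw [hg₁, hg₂] at e1 e2
  linarith
end
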